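/- Kostka polynomials of type B_n with one column diagrams: for integers 0 ≤ l ≤ r ≤ n, define K(n,r,l) := (−1)^l (t^{n−r+1};t)_l · ∑_{k=0}^{⌊l/2⌋} (−t^{n−r};t)_{2k} t^k / ((t²;t²)_k (t^{2n−2r+2};t²)_k) + (−1)^{l−1} (t^{n−r+2};t)_{l−1} · ∑_{k=0}^{⌊(l−1)/2⌋} (−t^{n−r+1};t)_{2k} t^k / ((t²;t²)_k (t^{2n−2r+4};t²)_k) (for l = 0 the second sum is empty), as an element of the rational function field ℚ(t); here the factor (−t^{n−r};t)_{2k} is the cancelled form of the ratio (t^{2n−2r};t²)_{2k}/(t^{n−r};t)_{2k}, and similarly for (−t^{n−r+1};t)_{2k}. Then K(n,r,l) = t^L · [n−r+2L choose L]_{t²} if l = 2L, and K(n,r,l) = t^{L+n−r+1} · [n−r+2L+1 choose L]_{t²} if l = 2L+1. In particular K(n,r,l) is a polynomial in t with nonnegative integer coefficients. -/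

import Mathlib

/-!
Splitting off the last summand of each sum gives the recursion
`K(l+1) = (t^{n-r+l+1} - 1) K(l) + c(l+1)`, where the increment `c` is a single product of
q-Pochhammer symbols. Through `(z;q)_k (-z;q)_k = (z²;q²)_k` it collapses to
`(1 + t^a) t^k [a+2k choose k]_{t²} / (1 + t^{a+2k})` (with `a = n - r` for even `l + 1` and
`a = n - r + 1` for odd `l + 1`), and the neighbour relations between Gaussian binomials show that
the claimed closed forms satisfy the same recursion. Nonnegativity then follows from the q-Pascal
rule, which builds `[m choose j]_q` from `1` by sums and multiplication by powers of `q`.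
-/

open Finset

noncomputable section

/-- The rational function field ℚ(t). -/
abbrev F : Type := RatFunc ℚ

/-- The variable `t`. -/
def T : F := RatFunc.X

/-- The q-Pochhammer symbol (z;q)_k. -/
def qPoch (z q : F) (k : ℕ) : F := ∏ j ∈ Finset.range k, (1 - z * q ^ j)

/-- The Gaussian binomial coefficient `[m choose j]_q = ∏_{k=1}^j (1−q^{m−k+1})/(1−q^k)`. -/
def qbinom (q : F) (m j : ℕ) : F :=
  ∏ k ∈ Finset.range j, ((1 - q ^ (m - k)) / (1 - q ^ (k+1)))

/-- The Kostka coefficient `K^{B_n}_{(1^r)(1^{r−l})}(t)` in its explicit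
two-sum form (the second sum being empty for `l = 0`). -/
def KB (n r l : ℕ) : F :=
  (-1 : F)^l * qPoch (T^(n-r+1)) T l *
    (∑ k ∈ Finset.range (l/2 + 1),
      qPoch (-(T^(n-r))) T (2*k) * T^k /
        (qPoch (T^2) (T^2) k * qPoch (T^(2*(n-r)+2)) (T^2) k)) +
  (if l = 0 then 0 else
    (-1 : F)^(l-1) * qPoch (T^(n-r+2)) T (l-1) *
      (∑ k ∈ Finset.range ((l-1)/2 + 1),
        qPoch (-(T^(n-r+1))) T (2*k) * T^k /
          (qPoch (T^2) (T^2) k * qPoch (T^(2*(n-r)+4)) (T^2) k)))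

open Polynomial

section QPochhammer

variable (z q : F)

theorem qPoch_zero : qPoch z q 0 = 1 := prod_range_zero _

theorem qPoch_succ (k : ℕ) : qPoch z q (k + 1) = qPoch z q k * (1 - z * q ^ k) :=
  prod_range_succ _ _

theorem qPoch_succ' (k : ℕ) : qPoch z q (k + 1) = (1 - z) * qPoch (z * q) q k := by
  simp only [qPoch, prod_range_succ', pow_zero, mul_one, pow_succ', mul_assoc]
  ring

theorem qPoch_add (j k : ℕ) : qPoch z q (j + k) = qPoch z q j * qPoch (z * q ^ j) q k := by
  simp only [qPoch, prod_range_add, pow_add, mul_assoc]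

theorem qPoch_mul_qPoch_neg (k : ℕ) : qPoch z q k * qPoch (-z) q k = qPoch (z ^ 2) (q ^ 2) k := by
  simp only [qPoch, ← prod_mul_distrib]
  exact prod_congr rfl fun j _ => by ring

end QPochhammer

section GaussianBinomial

variable (q : F)

theorem qbinom_zero_right (m : ℕ) : qbinom q m 0 = 1 := prod_range_zero _

theorem qbinom_eq_zero_of_lt {m j : ℕ} (h : m < j) : qbinom q m j = 0 :=
  prod_eq_zero (mem_range.2 h) (by simp)

theorem qbinom_succ_right (m j : ℕ) :
    qbinom q m (j + 1) = qbinom q m j * (1 - q ^ (m - j)) / (1 - q ^ (j + 1)) := by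
  rw [qbinom, prod_range_succ, mul_div_assoc]
  rfl

theorem qbinom_succ_succ (m j : ℕ) :
    qbinom q (m + 1) (j + 1) = qbinom q m j * (1 - q ^ (m + 1)) / (1 - q ^ (j + 1)) := by
  rw [qbinom, qbinom, prod_div_distrib, prod_div_distrib,
    prod_range_succ' (fun k => 1 - q ^ (m + 1 - k)), prod_range_succ (fun k => 1 - q ^ (k + 1))]
  simp only [Nat.add_sub_add_right, Nat.sub_zero]
  rw [div_mul_eq_mul_div, div_div]

theorem qbinom_succ_succ_eq_add {m j : ℕ} (h : 1 - q ^ (j + 1) ≠ 0) :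
    qbinom q (m + 1) (j + 1) = qbinom q m j + q ^ (j + 1) * qbinom q m (j + 1) := by
  rcases lt_or_ge m j with hmj | hjm
  · simp [qbinom_eq_zero_of_lt q hmj, qbinom_eq_zero_of_lt q (Nat.succ_lt_succ hmj),
      qbinom_eq_zero_of_lt q (hmj.trans (Nat.lt_succ_self j))]
  obtain ⟨d, rfl⟩ := Nat.exists_eq_add_of_le hjm
  rw [qbinom_succ_succ, qbinom_succ_right, Nat.add_sub_cancel_left]
  field_simp
  ring

theorem qPoch_mul_qbinom {m j : ℕ} (hj : j ≤ m + 1) (h : qPoch q q j ≠ 0) :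
    qPoch q q j * qbinom q m j = qPoch (q ^ (m + 1 - j)) q j := by
  have hden : qPoch q q j = ∏ k ∈ range j, (1 - q ^ (k + 1)) := by simp only [qPoch, pow_succ']
  rw [qbinom, prod_div_distrib, hden, mul_div_cancel₀ _ (hden ▸ h), qPoch,
    ← prod_range_reflect]
  refine prod_congr rfl fun k hk => ?_
  rw [← pow_add]
  congr 2
  have := mem_range.1 hk
  omega

end GaussianBinomial

theorem one_sub_T_pow_ne_zero {m : ℕ} (hm : m ≠ 0) : 1 - T ^ m ≠ 0 := by
  have hX : T ^ m - 1 = algebraMap ℚ[X] F (X ^ m - C 1) := by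
    simp [T]
  rw [← neg_ne_zero, neg_sub, hX]
  exact RatFunc.algebraMap_ne_zero (X_pow_sub_C_ne_zero (Nat.pos_of_ne_zero hm) 1)

theorem one_add_T_pow_ne_zero (m : ℕ) : 1 + T ^ m ≠ 0 := by
  rcases Nat.eq_zero_or_pos m with rfl | hm
  · norm_num
  have hX : 1 + T ^ m = algebraMap ℚ[X] F (X ^ m + C 1) := by
    simp [T, add_comm]
  rw [hX]
  exact RatFunc.algebraMap_ne_zero (X_pow_add_C_ne_zero hm 1)

theorem qPoch_T_pow_ne_zero {s : ℕ} (hs : s ≠ 0) (d k : ℕ) : qPoch (T ^ s) (T ^ d) k ≠ 0 :=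
  prod_ne_zero_iff.2 fun j _ => by
    rw [← pow_mul, ← pow_add]
    exact one_sub_T_pow_ne_zero (by omega)

def kbSummand (a k : ℕ) : F :=
  qPoch (-(T ^ a)) T (2 * k) * T ^ k / (qPoch (T ^ 2) (T ^ 2) k * qPoch (T ^ (2 * a + 2)) (T ^ 2) k)

def kbHalf (a m : ℕ) : F :=
  (-1) ^ m * qPoch (T ^ (a + 1)) T m * ∑ k ∈ range (m / 2 + 1), kbSummand a k

def kbIncrement (a k : ℕ) : F := qPoch (T ^ (a + 1)) T (2 * k) * kbSummand a k

theorem KB_eq_kbHalf (n r l : ℕ) :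
    KB n r l = kbHalf (n - r) l + if l = 0 then 0 else kbHalf (n - r + 1) (l - 1) := by
  rfl

theorem kbIncrement_zero (a : ℕ) : kbIncrement a 0 = 1 := by
  simp [kbIncrement, kbSummand, qPoch_zero]

theorem kbHalf_zero (a : ℕ) : kbHalf a 0 = 1 := by
  simp [kbHalf, kbSummand, qPoch_zero]

theorem kbHalf_two_mul_add_one (a L : ℕ) :
    kbHalf a (2 * L + 1) = (T ^ (a + 2 * L + 1) - 1) * kbHalf a (2 * L) := by
  rw [kbHalf, kbHalf, show (2 * L + 1) / 2 = 2 * L / 2 by omega, qPoch_succ, pow_succ, ← pow_add,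
    show a + 1 + 2 * L = a + 2 * L + 1 by omega]
  ring

theorem kbHalf_two_mul_add_two (a L : ℕ) :
    kbHalf a (2 * L + 2)
      = (T ^ (a + 2 * L + 2) - 1) * kbHalf a (2 * L + 1) + kbIncrement a (L + 1) := by
  have hsign : (-1 : F) ^ (2 * L + 2) = (-1) ^ (2 * L) := by rw [pow_add, neg_one_sq, mul_one]
  rw [kbHalf_two_mul_add_one, kbHalf, kbHalf, show (2 * L + 2) / 2 = L + 1 by omega,
    show 2 * L / 2 = L by omega, sum_range_succ, hsign, kbIncrement,
    show 2 * (L + 1) = 2 * L + 1 + 1 by ring,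
    qPoch_succ, qPoch_succ, ← pow_add, ← pow_add, show a + 1 + 2 * L = a + 2 * L + 1 by omega,
    show a + 1 + (2 * L + 1) = a + 2 * L + 2 by omega, (even_two_mul L).neg_one_pow]
  ring

theorem KB_zero (n r : ℕ) : KB n r 0 = 1 := by
  simp [KB_eq_kbHalf, kbHalf_zero]

theorem KB_two_mul_add_one (n r L : ℕ) :
    KB n r (2 * L + 1)
      = (T ^ (n - r + 2 * L + 1) - 1) * KB n r (2 * L) + kbIncrement (n - r + 1) L := by
  rcases L with _ | L
  · rw [KB_eq_kbHalf, KB_zero, kbHalf_two_mul_add_one]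
    simp [kbHalf_zero, kbIncrement_zero]
  · rw [KB_eq_kbHalf, KB_eq_kbHalf, if_neg (by omega), if_neg (by omega),
      show 2 * (L + 1) + 1 - 1 = 2 * L + 2 by omega, show 2 * (L + 1) - 1 = 2 * L + 1 by omega,
      kbHalf_two_mul_add_one, kbHalf_two_mul_add_two]
    ring

theorem KB_two_mul_add_two (n r L : ℕ) :
    KB n r (2 * L + 2)
      = (T ^ (n - r + 2 * L + 2) - 1) * KB n r (2 * L + 1) + kbIncrement (n - r) (L + 1) := by
  rw [KB_eq_kbHalf, KB_eq_kbHalf, if_neg (by omega), if_neg (by omega),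
    show 2 * L + 2 - 1 = 2 * L + 1 by omega, Nat.add_sub_cancel, kbHalf_two_mul_add_two,
    kbHalf_two_mul_add_one (n - r + 1)]
  ring

theorem kbIncrement_mul_one_add_T_pow (a k : ℕ) :
    kbIncrement a k * (1 + T ^ (a + 2 * k))
      = (1 + T ^ a) * T ^ k * qbinom (T ^ 2) (a + 2 * k) k := by
  have hD : qPoch (T ^ 2) (T ^ 2) k ≠ 0 := qPoch_T_pow_ne_zero two_ne_zero 2 k
  have hE : qPoch (T ^ (2 * a + 2)) (T ^ 2) k ≠ 0 := qPoch_T_pow_ne_zero (by omega) 2 k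
  have hshift : qPoch (-(T ^ a)) T (2 * k) * (1 + T ^ (a + 2 * k))
      = (1 + T ^ a) * qPoch (-(T ^ (a + 1))) T (2 * k) := by
    have := (qPoch_succ (-(T ^ a)) T (2 * k)).symm.trans (qPoch_succ' _ _ _)
    simpa only [neg_mul, ← pow_add, ← pow_succ, sub_neg_eq_add] using this
  have hsplit : qPoch (T ^ (a + 1)) T (2 * k) * qPoch (-(T ^ (a + 1))) T (2 * k)
      = qPoch (T ^ (2 * a + 2)) (T ^ 2) k
        * (qPoch (T ^ 2) (T ^ 2) k * qbinom (T ^ 2) (a + 2 * k) k) := by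
    rw [qPoch_mul_qPoch_neg, two_mul k, qPoch_add, qPoch_mul_qbinom _ (by omega) hD, ← pow_mul,
      ← pow_mul, ← pow_add, ← pow_mul]
    congr 3 <;> omega
  rw [kbIncrement, kbSummand]
  field_simp
  linear_combination
    (T ^ k * qPoch (T ^ (a + 1)) T (2 * k)) * hshift + (1 + T ^ a) * T ^ k * hsplit

theorem T_pow_mul_qbinom_even_succ (a L : ℕ) :
    T ^ (L + 1) * qbinom (T ^ 2) (a + 2 * (L + 1)) (L + 1)
      = (T ^ (a + 2 * L + 2) - 1) * (T ^ (L + a + 1) * qbinom (T ^ 2) (a + 2 * L + 1) L)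
        + kbIncrement a (L + 1) := by
  have hinc := kbIncrement_mul_one_add_T_pow a (L + 1)
  have hden : 1 - (T ^ 2) ^ (L + 1) ≠ 0 := by
    rw [← pow_mul]; exact one_sub_T_pow_ne_zero (by omega)
  rw [← mul_left_inj' (one_add_T_pow_ne_zero (a + 2 * (L + 1))), add_mul, hinc,
    show a + 2 * (L + 1) = a + 2 * L + 1 + 1 by ring, qbinom_succ_succ]
  field_simp
  ring

theorem T_pow_mul_qbinom_odd_succ (a L : ℕ) :
    T ^ (L + 1 + a + 1) * qbinom (T ^ 2) (a + 2 * (L + 1) + 1) (L + 1)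
      = (T ^ (a + 2 * (L + 1) + 1) - 1) * (T ^ (L + 1) * qbinom (T ^ 2) (a + 2 * (L + 1)) (L + 1))
        + kbIncrement (a + 1) (L + 1) := by
  have hinc := kbIncrement_mul_one_add_T_pow (a + 1) (L + 1)
  have hden : 1 - (T ^ 2) ^ (L + 1) ≠ 0 := by
    rw [← pow_mul]; exact one_sub_T_pow_ne_zero (by omega)
  rw [show a + 1 + 2 * (L + 1) = a + 2 * (L + 1) + 1 by ring] at hinc
  rw [← mul_left_inj' (one_add_T_pow_ne_zero (a + 2 * (L + 1) + 1)), add_mul, hinc,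
    qbinom_succ_succ, qbinom_succ_right, show a + 2 * (L + 1) - L = a + L + 2 by omega]
  field_simp
  ring

theorem KB_closed_form (n r L : ℕ) :
    KB n r (2 * L) = T ^ L * qbinom (T ^ 2) (n - r + 2 * L) L ∧
      KB n r (2 * L + 1) = T ^ (L + (n - r) + 1) * qbinom (T ^ 2) (n - r + 2 * L + 1) L := by
  induction L with
  | zero =>
    have hodd := KB_two_mul_add_one n r 0
    simp only [mul_zero, zero_add, add_zero, KB_zero, kbIncrement_zero] at hodd
    simp [KB_zero, qbinom_zero_right, hodd]
  | succ L ih =>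
    have heven :
        KB n r (2 * (L + 1)) = T ^ (L + 1) * qbinom (T ^ 2) (n - r + 2 * (L + 1)) (L + 1) := by
      rw [T_pow_mul_qbinom_even_succ, ← ih.2, ← KB_two_mul_add_two, mul_add_one]
    refine ⟨heven, ?_⟩
    rw [T_pow_mul_qbinom_odd_succ, ← heven, ← KB_two_mul_add_one]

def ofNatPoly : ℕ[X] →+* F := (algebraMap ℚ[X] F).comp (mapRingHom (Nat.castRingHom ℚ))

theorem T_mem_rangeS_ofNatPoly : T ∈ ofNatPoly.rangeS :=
  ⟨X, by simp [ofNatPoly, T]⟩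

theorem qbinom_T_sq_mem_rangeS_ofNatPoly (m j : ℕ) : qbinom (T ^ 2) m j ∈ ofNatPoly.rangeS := by
  have hT2 := pow_mem T_mem_rangeS_ofNatPoly 2
  induction m generalizing j with
  | zero =>
    rcases j with _ | j
    · exact qbinom_zero_right _ 0 ▸ one_mem _
    · exact qbinom_eq_zero_of_lt _ (Nat.succ_pos j) ▸ zero_mem _
  | succ m ih =>
    rcases j with _ | j
    · exact qbinom_zero_right _ _ ▸ one_mem _
    · have hden : 1 - (T ^ 2) ^ (j + 1) ≠ 0 := by
        rw [← pow_mul]; exact one_sub_T_pow_ne_zero (by omega)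
      rw [qbinom_succ_succ_eq_add _ hden]
      exact add_mem (ih j) (mul_mem (pow_mem hT2 _) (ih (j + 1)))

theorem kostka_Bn_general (n r l : ℕ) :
    (∀ L : ℕ, l = 2*L → KB n r l = T^L * qbinom (T^2) (n - r + 2*L) L) ∧
    (∀ L : ℕ, l = 2*L + 1 → KB n r l = T^(L + (n-r) + 1) * qbinom (T^2) (n - r + 2*L + 1) L) ∧
    (∃ p : Polynomial ℕ,
      KB n r l = algebraMap (Polynomial ℚ) F (p.map (Nat.castRingHom ℚ))) := by
  refine ⟨?_, ?_, ?_⟩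
  · rintro L rfl
    exact (KB_closed_form n r L).1
  · rintro L rfl
    exact (KB_closed_form n r L).2
  have hmem : KB n r l ∈ ofNatPoly.rangeS := by
    obtain ⟨L, rfl | rfl⟩ := Nat.even_or_odd' l
    · rw [(KB_closed_form n r L).1]
      exact mul_mem (pow_mem T_mem_rangeS_ofNatPoly _) (qbinom_T_sq_mem_rangeS_ofNatPoly _ _)
    · rw [(KB_closed_form n r L).2]
      exact mul_mem (pow_mem T_mem_rangeS_ofNatPoly _) (qbinom_T_sq_mem_rangeS_ofNatPoly _ _)
  obtain ⟨p, hp⟩ := hmem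
  exact ⟨p, hp.symm⟩

/-- Closed form for the type `B_n` one-column Kostka polynomials:
`K(n,r,2L) = t^L [n−r+2L choose L]_{t²}` and
`K(n,r,2L+1) = t^{L+n−r+1} [n−r+2L+1 choose L]_{t²}`; in particular each
`K(n,r,l)` is a polynomial in `t` with nonnegative integer coefficients. -/
theorem kostka_Bn (n r l : ℕ) (hl : l ≤ r) (hr : r ≤ n) :
    (∀ L : ℕ, l = 2*L → KB n r l = T^L * qbinom (T^2) (n - r + 2*L) L) ∧
    (∀ L : ℕ, l = 2*L + 1 → KB n r l = T^(L + (n-r) + 1) * qbinom (T^2) (n - r + 2*L + 1) L) ∧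
    (∃ p : Polynomial ℕ,
      KB n r l = algebraMap (Polynomial ℚ) F (p.map (Nat.castRingHom ℚ))) :=
  kostka_Bn_general n r l

end
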